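/- Let d ≥ 1 be an integer and let V : ℤᵈ → ℂ satisfy ∑_{n ∈ ℤᵈ} |V(n)| < ∞, and set H = Δ + V on ℓ²(ℤᵈ). Then the diagonal families (((H² − Δ²)δ_m)(m))_{m ∈ ℤᵈ} and (((H³ − Δ³)δ_m)(m))_{m ∈ ℤᵈ} are summable, and ∑_{m ∈ ℤᵈ} ((H² − Δ²)δ_m)(m) = ∑_{m ∈ ℤᵈ} V(m)², while ∑_{m ∈ ℤᵈ} ((H³ − Δ³)δ_m)(m) = ∑_{m ∈ ℤᵈ} (V(m)³ + (3d/2)·V(m)). -/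

import Mathlib

/-!
Expand `(Δ + V)ᵏ - Δᵏ` into words in `Δ` and `V` and read off the diagonal entries at `δ_m`.
Since `V` is diagonal, `Δ` has zero diagonal, `(Δδ_m)(m ± eⱼ) = 1/2` and `(Δ²)_{mm} = d/2`, one
gets `(H² - Δ²)_{mm} = V(m)²` and
`(H³ - Δ³)_{mm} = V(m)³ + d V(m) + (1/4) ∑ⱼ (V(m + eⱼ) + V(m - eⱼ))`.
Summing over `m`, translation invariance of `∑ₘ` turns the hopping term into `(d/2) ∑ V`, and
`ℓ¹ ⊆ ℓᵏ` gives the summability.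
-/

open MeasureTheory

/-- `L` is the discrete Laplacian on `ℓ²(ℤᵈ)`:
`(Lf)(n) = (1/2)∑_{j=1}^d (f(n+eⱼ) + f(n-eⱼ))`. -/
def IsDiscreteLaplacian (d : ℕ)
    (L : lp (fun _ : Fin d → ℤ => ℂ) 2 →L[ℂ] lp (fun _ : Fin d → ℤ => ℂ) 2) : Prop :=
  ∀ (f : lp (fun _ : Fin d → ℤ => ℂ) 2) (n : Fin d → ℤ),
    L f n = (1 / 2) * ∑ j : Fin d, (f (n + Pi.single j 1) + f (n - Pi.single j 1))

/-- `T` is the operator of multiplication by `V` on `ℓ²(ℤᵈ)`. -/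
def IsMulOp (d : ℕ) (V : (Fin d → ℤ) → ℂ)
    (T : lp (fun _ : Fin d → ℤ => ℂ) 2 →L[ℂ] lp (fun _ : Fin d → ℤ => ℂ) 2) : Prop :=
  ∀ (f : lp (fun _ : Fin d → ℤ => ℂ) 2) (n : Fin d → ℤ), T f n = V n * f n

namespace Pi

variable {ι : Type*} [DecidableEq ι]

theorem single_left_injective {M : Type*} [Zero M] {x : M} (hx : x ≠ 0) :
    Function.Injective (fun i : ι => (Pi.single i x : ι → M)) := fun i j h => by
  by_contra hij
  simpa [hij, hx] using congrFun h i

theorem single_one_add_single_one_ne_zero (i j : ι) :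
    (Pi.single i (1 : ℤ) : ι → ℤ) + Pi.single j 1 ≠ 0 := by
  intro h
  have := congrFun h i
  simp only [add_apply, single_eq_same, single_apply, zero_apply] at this
  split_ifs at this <;> omega

end Pi

theorem summable_pow_of_summable_norm {ι R : Type*} [NormedRing R] [CompleteSpace R] {f : ι → R}
    (hf : Summable (‖f ·‖)) {k : ℕ} (hk : k ≠ 0) : Summable (fun i => f i ^ k) := by
  have hsmall : ∀ᶠ i in Filter.cofinite, ‖f i‖ < 1 :=
    hf.tendsto_cofinite_zero.eventually (gt_mem_nhds one_pos)
  refine hf.of_norm_bounded_eventually (hsmall.mono fun i hi => ?_)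
  calc ‖f i ^ k‖ ≤ ‖f i‖ ^ k := norm_pow_le' _ (Nat.pos_of_ne_zero hk)
    _ ≤ ‖f i‖ := pow_le_of_le_one (norm_nonneg _) hi.le hk

theorem HasSum.sum_comp_add_add_comp_sub {ι G R : Type*} [Fintype ι] [AddCommGroup G]
    [Semiring R] [TopologicalSpace R] [IsTopologicalSemiring R] {f : G → R} {s : R}
    (hf : HasSum f s) (a : ι → G) :
    HasSum (fun m => ∑ j, (f (m + a j) + f (m - a j))) (Fintype.card ι * (2 * s)) := by
  have hshift : ∀ j, HasSum (fun m => f (m + a j) + f (m - a j)) (2 * s) := fun j => by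
    rw [two_mul]
    exact ((Equiv.addRight (a j)).hasSum_iff.mpr hf).add ((Equiv.subRight (a j)).hasSum_iff.mpr hf)
  convert hasSum_sum fun j _ => hshift j using 1
  rw [Finset.sum_const, Finset.card_univ, nsmul_eq_mul]

section Schrodinger

variable {d : ℕ} {L T : lp (fun _ : Fin d → ℤ => ℂ) 2 →L[ℂ] lp (fun _ : Fin d → ℤ => ℂ) 2}
  {V : (Fin d → ℤ) → ℂ}

theorem IsMulOp.apply_single (hT : IsMulOp d V T) (m : Fin d → ℤ) (c : ℂ) :
    T (lp.single 2 m c) = V m • lp.single 2 m c := by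
  ext n
  rw [hT, lp.coeFn_smul, Pi.smul_apply, smul_eq_mul]
  rcases eq_or_ne n m with rfl | hnm
  · rfl
  · simp [Pi.single_eq_of_ne hnm]

namespace IsDiscreteLaplacian

variable (hL : IsDiscreteLaplacian d L) (m : Fin d → ℤ)
include hL

theorem apply_single_self : L (lp.single 2 m (1 : ℂ)) m = 0 := by
  rw [hL]
  simp [Pi.single_eq_zero_iff]

theorem apply_single_add_single (j : Fin d) :
    L (lp.single 2 m (1 : ℂ)) (m + Pi.single j 1) = 1 / 2 := by
  rw [hL]
  simp [Pi.single_apply, add_assoc, add_sub_assoc, sub_eq_zero,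
    Pi.single_one_add_single_one_ne_zero, (Pi.single_left_injective (M := ℤ) one_ne_zero).eq_iff]

theorem apply_single_sub_single (j : Fin d) :
    L (lp.single 2 m (1 : ℂ)) (m - Pi.single j 1) = 1 / 2 := by
  rw [hL]
  simp [Pi.single_apply, sub_add_eq_add_sub, add_sub_assoc, sub_sub, sub_eq_zero,
    Pi.single_one_add_single_one_ne_zero, (Pi.single_left_injective (M := ℤ) one_ne_zero).eq_iff]

theorem apply_apply_single_self : L (L (lp.single 2 m (1 : ℂ))) m = d / 2 := by
  rw [hL]
  simp only [hL.apply_single_add_single, hL.apply_single_sub_single, add_halves,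
    Finset.sum_const, Finset.card_univ, Fintype.card_fin, nsmul_eq_mul, mul_one]
  ring

theorem apply_mulOp_apply_single_self (hT : IsMulOp d V T) :
    L (T (L (lp.single 2 m (1 : ℂ)))) m =
      1 / 4 * ∑ j : Fin d, (V (m + Pi.single j 1) + V (m - Pi.single j 1)) := by
  rw [hL, Finset.mul_sum, Finset.mul_sum]
  refine Finset.sum_congr rfl fun j _ => ?_
  rw [hT, hT, hL.apply_single_add_single, hL.apply_single_sub_single]
  ring

theorem add_sq_sub_sq_apply_single_self (hT : IsMulOp d V T) :
    ((L + T) ^ 2 - L ^ 2) (lp.single 2 m (1 : ℂ)) m = V m ^ 2 := by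
  have hexpand : (L + T) ^ 2 - L ^ 2 = L * T + T * L + T * T := by noncomm_ring
  simp only [hexpand, add_apply, mul_apply_eq_comp, lp.coeFn_add,
    Pi.add_apply, hT.apply_single, map_smul, lp.coeFn_smul, Pi.smul_apply, smul_eq_mul, hT _ _,
    hL.apply_single_self, lp.single_apply_self]
  ring

theorem add_cube_sub_cube_apply_single_self (hT : IsMulOp d V T) :
    ((L + T) ^ 3 - L ^ 3) (lp.single 2 m (1 : ℂ)) m =
      V m ^ 3 + d * V m + 1 / 4 * ∑ j : Fin d, (V (m + Pi.single j 1) + V (m - Pi.single j 1)) := by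
  have hexpand : (L + T) ^ 3 - L ^ 3 = L * (L * T) + L * (T * L) + T * (L * L)
      + L * (T * T) + T * (L * T) + T * (T * L) + T * (T * T) := by noncomm_ring
  simp only [hexpand, add_apply, mul_apply_eq_comp, lp.coeFn_add,
    Pi.add_apply, hT.apply_single, map_smul, lp.coeFn_smul, Pi.smul_apply, smul_eq_mul, hT _ _,
    hL.apply_single_self, hL.apply_apply_single_self, hL.apply_mulOp_apply_single_self _ hT,
    lp.single_apply_self]
  ring

end IsDiscreteLaplacian

end Schrodinger

theorem statement9_general (d : ℕ) (V : (Fin d → ℤ) → ℂ)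
    (hV : Summable (fun n => ‖V n‖))
    (L T : lp (fun _ : Fin d → ℤ => ℂ) 2 →L[ℂ] lp (fun _ : Fin d → ℤ => ℂ) 2)
    (hL : IsDiscreteLaplacian d L) (hT : IsMulOp d V T) :
    Summable (fun m : Fin d → ℤ => ((L + T) ^ 2 - L ^ 2) (lp.single 2 m (1:ℂ)) m) ∧
    Summable (fun m : Fin d → ℤ => ((L + T) ^ 3 - L ^ 3) (lp.single 2 m (1:ℂ)) m) ∧
    (∑' m : Fin d → ℤ, ((L + T) ^ 2 - L ^ 2) (lp.single 2 m (1:ℂ)) m)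
      = ∑' m : Fin d → ℤ, V m ^ 2 ∧
    (∑' m : Fin d → ℤ, ((L + T) ^ 3 - L ^ 3) (lp.single 2 m (1:ℂ)) m)
      = ∑' m : Fin d → ℤ, (V m ^ 3 + ((3 * d : ℂ) / 2) * V m) := by
  have hVsum : HasSum V (∑' n, V n) := hV.of_norm.hasSum
  have hV3 := (summable_pow_of_summable_norm hV three_ne_zero).hasSum
  have h2 : HasSum (fun m => ((L + T) ^ 2 - L ^ 2) (lp.single 2 m (1:ℂ)) m) (∑' m, V m ^ 2) := by
    simpa only [hL.add_sq_sub_sq_apply_single_self _ hT]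
      using (summable_pow_of_summable_norm hV two_ne_zero).hasSum
  have h3 : HasSum (fun m => ((L + T) ^ 3 - L ^ 3) (lp.single 2 m (1:ℂ)) m)
      (∑' m, V m ^ 3 + d * ∑' m, V m + 1 / 4 * (d * (2 * ∑' m, V m))) := by
    simpa only [hL.add_cube_sub_cube_apply_single_self _ hT, Fintype.card_fin]
      using (hV3.add (hVsum.mul_left (d : ℂ))).add
        ((hVsum.sum_comp_add_add_comp_sub fun j : Fin d => Pi.single j 1).mul_left (1 / 4))
  have htrace3 : ∑' m, (V m ^ 3 + ((3 * d : ℂ) / 2) * V m)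
      = ∑' m, V m ^ 3 + d * ∑' m, V m + 1 / 4 * (d * (2 * ∑' m, V m)) := by
    rw [hV3.summable.tsum_add (hV.of_norm.mul_left _), tsum_mul_left]
    ring
  exact ⟨h2.summable, h3.summable, h2.tsum_eq, h3.tsum_eq.trans htrace3.symm⟩

/-- For `d ≥ 1` and `V ∈ ℓ¹(ℤᵈ)`, with `H = Δ + V`, the diagonal families
of `H² - Δ²` and `H³ - Δ³` are summable with
`Tr(H² - Δ²) = ∑ V(m)²` and `Tr(H³ - Δ³) = ∑ (V(m)³ + (3d/2)V(m))`. -/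
theorem statement9 (d : ℕ) (hd : 1 ≤ d) (V : (Fin d → ℤ) → ℂ)
    (hV : Summable (fun n => ‖V n‖))
    (L T : lp (fun _ : Fin d → ℤ => ℂ) 2 →L[ℂ] lp (fun _ : Fin d → ℤ => ℂ) 2)
    (hL : IsDiscreteLaplacian d L) (hT : IsMulOp d V T) :
    Summable (fun m : Fin d → ℤ => ((L + T) ^ 2 - L ^ 2) (lp.single 2 m (1:ℂ)) m) ∧
    Summable (fun m : Fin d → ℤ => ((L + T) ^ 3 - L ^ 3) (lp.single 2 m (1:ℂ)) m) ∧
    (∑' m : Fin d → ℤ, ((L + T) ^ 2 - L ^ 2) (lp.single 2 m (1:ℂ)) m)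
      = ∑' m : Fin d → ℤ, V m ^ 2 ∧
    (∑' m : Fin d → ℤ, ((L + T) ^ 3 - L ^ 3) (lp.single 2 m (1:ℂ)) m)
      = ∑' m : Fin d → ℤ, (V m ^ 3 + ((3 * d : ℂ) / 2) * V m) :=
  statement9_general d V hV L T hL hT
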